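/- arXiv:1412.1540 — 2 statements merged into one kernel-verified Lean document; each statement's English description precedes it below -/
import Mathlib

section
/- Let x(t) be a nontrivial solution of the linear cyclic negative feedback system. Then the set {t ∈ ℝ : x(t) ∉ 𝒩} consists of isolated points, and N(x(·)) is nonincreasing along the solution: whenever s < t with x(s) ∈ 𝒩 and x(t) ∈ 𝒩, one has N(x(t)) ≤ N(x(s)). -/
open Filter Topology

/-- δ₁ = −1 (index `0` in our 0-based indexing), δᵢ = 1 for the other indices. -/
def cyclicDelta (n : ℕ) [NeZero n] (i : Fin n) : ℝ := if i = 0 then -1 else 1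

/-- The set Λ of vectors with all coordinates nonzero. -/
def cyclicLambda (n : ℕ) [NeZero n] : Set (Fin n → ℝ) := {x | ∀ i, x i ≠ 0}

/-- The integer valued Lyapunov function `N(x) = card {i : δᵢ xᵢ x_{i−1} < 0}`
(cyclic indices, `x₀ = xₙ`). -/
noncomputable def cyclicN (n : ℕ) [NeZero n] (x : Fin n → ℝ) : ℕ :=
  Nat.card {i : Fin n // cyclicDelta n i * x i * x (i - 1) < 0}

/-- `N_m(x)`: the minimum of `N` over `U ∩ Λ` for all sufficiently small
neighborhoods `U` of `x`, i.e. the least value of `N` attained in every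
neighborhood of `x` within `Λ`. -/
noncomputable def cyclicNm (n : ℕ) [NeZero n] (x : Fin n → ℝ) : ℕ :=
  sInf {k | ∃ᶠ y in 𝓝[cyclicLambda n] x, cyclicN n y = k}

/-- `N_M(x)`: the maximum of `N` over `U ∩ Λ` for all sufficiently small
neighborhoods `U` of `x`. -/
noncomputable def cyclicNM (n : ℕ) [NeZero n] (x : Fin n → ℝ) : ℕ :=
  sSup {k | ∃ᶠ y in 𝓝[cyclicLambda n] x, cyclicN n y = k}

/-- The set 𝒩 on which `N` extends continuously. -/
def cyclicGood (n : ℕ) [NeZero n] : Set (Fin n → ℝ) :=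
  {x | cyclicNm n x = cyclicNM n x}

/-- ñ = n if n is odd, n − 1 if n is even. -/
def ntilde (n : ℕ) : ℕ := if n % 2 = 1 then n else n - 1

/-- A linear cyclic negative feedback system: coefficients `diag t i = a_{ii}(t)`
and `sub t i = a_{i,i−1}(t)` (cyclically, `sub t 0 = a_{1,n}(t)`), all continuous,
with `a_{1,n}(t) < 0` and `a_{i,i−1}(t) > 0` for `i ≠ 1`. -/
structure LinCNF (n : ℕ) [NeZero n] where
  diag : ℝ → Fin n → ℝ
  sub : ℝ → Fin n → ℝ
  cont_diag : ∀ i, Continuous fun t => diag t i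
  cont_sub : ∀ i, Continuous fun t => sub t i
  sub_neg : ∀ t, sub t 0 < 0
  sub_pos : ∀ t (i : Fin n), i ≠ 0 → 0 < sub t i

/-- `x` is a solution of the linear system `ẋᵢ = a_{ii}(t)xᵢ + a_{i,i−1}(t)x_{i−1}`. -/
def LinCNF.IsSolution {n : ℕ} [NeZero n] (S : LinCNF n) (x : ℝ → Fin n → ℝ) : Prop :=
  ∀ (t : ℝ) (i : Fin n),
    HasDerivAt (fun s => x s i) (S.diag t i * x t i + S.sub t i * x t (i - 1)) t

/-- `Φ` is the fundamental (matrix) solution, `Φ(0) = I`. -/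
def LinCNF.IsFundamental {n : ℕ} [NeZero n] (S : LinCNF n)
    (Φ : ℝ → (Fin n → ℝ) →ₗ[ℝ] (Fin n → ℝ)) : Prop :=
  Φ 0 = LinearMap.id ∧ ∀ x₀ : Fin n → ℝ, S.IsSolution fun t => Φ t x₀

/-- The cone `K_h = {0} ∪ {x : N_M(x) ≤ 2h − 1}`. -/
def Kcone (n : ℕ) [NeZero n] (h : ℕ) : Set (Fin n → ℝ) :=
  {0} ∪ {x | cyclicNM n x ≤ 2 * h - 1}

/-- The complementary cone `K^h = {0} ∪ {x : N_m(x) > 2h − 1}`. -/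
def KconeUp (n : ℕ) [NeZero n] (h : ℕ) : Set (Fin n → ℝ) :=
  {0} ∪ {x | 2 * h - 1 < cyclicNm n x}

/-!
A nontrivial solution never vanishes, by uniqueness for the linear system. Near any time `t₀`,
start from a coordinate with `xᵢ(t₀) ≠ 0` and go around the cycle: if `xⱼ(t₀) = 0`, the
integrating factor `exp (-∫ aⱼⱼ)` turns `xⱼ` into a function whose derivative has the sign of
`δⱼ xⱼ₋₁`, so `δⱼ xⱼ xⱼ₋₁ > 0` just after `t₀` and `< 0` just before. Hence `x` lies in `Λ` on a
punctured neighbourhood of `t₀` and `N` is constant on each side. Every vanishing coordinate is a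
sign change before `t₀` but not after, and any other sign change after `t₀` either persists from
before or sits right after a vanishing coordinate, so `N` can only drop at `t₀`. A function on `ℝ`
that is locally constant on both sides of every point and only jumps down is nonincreasing.
-/

open Set Finset

lemma mul_pos_of_mul_pos_of_mul_pos {a b c : ℝ} (hab : 0 < a * b) (hac : 0 < a * c) :
    0 < b * c :=
  pos_of_mul_pos_right (a := a * a) (by simpa only [mul_mul_mul_comm] using mul_pos hab hac)
    (mul_self_nonneg a)

lemma ContinuousAt.eventually_mul_pos {X : Type*} [TopologicalSpace X] {f : X → ℝ} {a : X}
    (hf : ContinuousAt f a) (ha : f a ≠ 0) : ∀ᶠ b in 𝓝 a, 0 < f a * f b :=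
  Tendsto.eventually_const_lt (mul_self_pos.2 ha) (continuousAt_const.mul hf)

open Fin.NatCast Fin.CommRing in
lemma Fin.forall_of_sub_one_imp {n : ℕ} [NeZero n] {p : Fin n → Prop} {i₀ : Fin n} (h₀ : p i₀)
    (h : ∀ j, p (j - 1) → p j) (j : Fin n) : p j := by
  have hadd : ∀ m : ℕ, p (i₀ + m) := by
    intro m
    induction m with
    | zero => simpa using h₀
    | succ m ih => exact h _ (by rwa [Nat.cast_succ, ← add_assoc, add_sub_cancel_right])
  simpa using hadd (j - i₀).val

section Counting

variable {n : ℕ} [NeZero n]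

lemma cyclicDelta_mul_self (i : Fin n) : cyclicDelta n i * cyclicDelta n i = 1 := by
  unfold cyclicDelta; split_ifs <;> norm_num

lemma cyclicN_eq_card (y : Fin n → ℝ) :
    cyclicN n y = #{i | cyclicDelta n i * y i * y (i - 1) < 0} := by
  rw [cyclicN, Nat.card_eq_fintype_card, Fintype.card_subtype]

lemma cyclicN_le (y : Fin n → ℝ) : cyclicN n y ≤ n :=
  (Finite.card_subtype_le _).trans_eq (Nat.card_fin n)

lemma cyclicDelta_mul_neg_iff {y z : Fin n → ℝ} {i : Fin n} (hi : 0 < y i * z i)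
    (hi' : 0 < y (i - 1) * z (i - 1)) :
    cyclicDelta n i * y i * y (i - 1) < 0 ↔ cyclicDelta n i * z i * z (i - 1) < 0 := by
  refine neg_iff_neg_of_mul_pos ?_
  calc 0 < (y i * z i) * (y (i - 1) * z (i - 1)) := mul_pos hi hi'
    _ = _ := by
      linear_combination -(y i * z i) * (y (i - 1) * z (i - 1)) * cyclicDelta_mul_self i

/-- Each sign change of `y` is one of `z` outside `Z`, or sits just after a point of `Z`. -/
lemma cyclicN_le_of_sign_agree_off {y z : Fin n → ℝ} (Z : Finset (Fin n))
    (hy : ∀ i ∈ Z, 0 < cyclicDelta n i * y i * y (i - 1))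
    (hz : ∀ i ∈ Z, cyclicDelta n i * z i * z (i - 1) < 0)
    (hyz : ∀ i ∉ Z, 0 < y i * z i) : cyclicN n y ≤ cyclicN n z := by
  classical
  rw [cyclicN_eq_card, cyclicN_eq_card]
  set A : Finset (Fin n) := {i | cyclicDelta n i * z i * z (i - 1) < 0}
  have hZA : Z ⊆ A := fun i hi => mem_filter.2 ⟨mem_univ i, hz i hi⟩
  have hsub : ({i | cyclicDelta n i * y i * y (i - 1) < 0} : Finset (Fin n)) ⊆
      (A \ Z) ∪ Z.map (Equiv.addRight 1).toEmbedding := by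
    intro i hi
    replace hi := (mem_filter.1 hi).2
    have hiZ : i ∉ Z := fun h => (hy i h).not_gt hi
    by_cases hi' : i - 1 ∈ Z
    · exact mem_union_right _ (mem_map.2 ⟨i - 1, hi', sub_add_cancel i 1⟩)
    · refine mem_union_left _ (mem_sdiff.2 ⟨mem_filter.2 ⟨mem_univ i, ?_⟩, hiZ⟩)
      exact (cyclicDelta_mul_neg_iff (hyz i hiZ) (hyz _ hi')).1 hi
  calc _ ≤ #((A \ Z) ∪ Z.map (Equiv.addRight 1).toEmbedding) := Finset.card_le_card hsub
    _ ≤ #(A \ Z) + #Z := (Finset.card_union_le _ _).trans_eq (by rw [Finset.card_map])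
    _ = #A := card_sdiff_add_card_eq_card hZA

lemma cyclicN_eq_of_mul_pos {y z : Fin n → ℝ} (h : ∀ i, 0 < y i * z i) :
    cyclicN n y = cyclicN n z :=
  le_antisymm (cyclicN_le_of_sign_agree_off ∅ (by simp) (by simp) fun i _ => h i)
    (cyclicN_le_of_sign_agree_off ∅ (by simp) (by simp) fun i _ => by rw [mul_comm]; exact h i)

lemma mem_cyclicLambda_of_mul_pos {σ y : Fin n → ℝ} (h : ∀ i, 0 < σ i * y i) :
    y ∈ cyclicLambda n :=
  fun i => right_ne_zero_of_mul (h i).ne'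

end Counting

section ContinuousExtension

variable {n : ℕ} [NeZero n]

lemma cyclicNm_eq_of_frequently {y : Fin n → ℝ} (hy : y ∈ cyclicGood n) {k : ℕ}
    (h : ∃ᶠ z in 𝓝[cyclicLambda n] y, cyclicN n z = k) : cyclicNm n y = k := by
  have hm : cyclicNm n y ≤ k := Nat.sInf_le h
  have hM : k ≤ cyclicNM n y := by
    refine le_csSup ⟨n, fun m hmk => ?_⟩ h
    obtain ⟨z, rfl⟩ := hmk.exists
    exact cyclicN_le z
  have hy : cyclicNm n y = cyclicNM n y := hy
  omega

lemma mem_cyclicGood_of_mem_cyclicLambda {y : Fin n → ℝ} (hy : y ∈ cyclicLambda n) :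
    y ∈ cyclicGood n := by
  have hev : ∀ᶠ z in 𝓝[cyclicLambda n] y, cyclicN n z = cyclicN n y := by
    refine eventually_nhdsWithin_of_eventually_nhds ?_
    filter_upwards [eventually_all.2 fun i =>
      (continuous_apply i).continuousAt.eventually_mul_pos (hy i)] with z hz
    exact (cyclicN_eq_of_mul_pos hz).symm
  have := nhdsWithin_neBot_of_mem hy
  have hvalues : {k | ∃ᶠ z in 𝓝[cyclicLambda n] y, cyclicN n z = k} = {cyclicN n y} := by
    refine Set.eq_singleton_iff_unique_mem.2 ⟨hev.frequently, fun k hk => ?_⟩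
    obtain ⟨z, hzk, hzy⟩ := (hk.and_eventually hev).exists
    exact hzk.symm.trans hzy
  show cyclicNm n y = cyclicNM n y
  rw [cyclicNm, cyclicNM, hvalues, csInf_singleton, csSup_singleton]

lemma cyclicNm_eq_of_tendsto {α : Type*} {l : Filter α} [l.NeBot] {f : α → Fin n → ℝ}
    {y : Fin n → ℝ} (hy : y ∈ cyclicGood n) (hf : Tendsto f l (𝓝 y)) {k : ℕ}
    (h : ∀ᶠ a in l, f a ∈ cyclicLambda n ∧ cyclicN n (f a) = k) : cyclicNm n y = k :=
  cyclicNm_eq_of_frequently hy <|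
    (tendsto_nhdsWithin_iff.2 ⟨hf, h.mono fun _ => And.left⟩).frequently
      (h.mono fun _ => And.right).frequently

end ContinuousExtension

lemma antitone_of_eventually_nhdsGT_of_eventually_nhdsLT {α : Type*} [Preorder α] {f : ℝ → α}
    (hgt : ∀ t, ∀ᶠ s in 𝓝[>] t, f s ≤ f t) (hlt : ∀ t, ∀ᶠ s in 𝓝[<] t, f t ≤ f s) :
    Antitone f := by
  intro a b hab
  set S := {u ∈ Icc a b | f u ≤ f a}
  have haS : a ∈ S := ⟨⟨le_rfl, hab⟩, le_rfl⟩
  have hbdd : BddAbove S := ⟨b, fun u hu => hu.1.2⟩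
  set c := sSup S
  have hac : a ≤ c := le_csSup hbdd haS
  have hcb : c ≤ b := csSup_le ⟨a, haS⟩ fun u hu => hu.1.2
  have hcS : c ∈ S := by
    refine ⟨⟨hac, hcb⟩, ?_⟩
    obtain ⟨l, hl, hsub⟩ := mem_nhdsLT_iff_exists_Ioo_subset.1 (hlt c)
    obtain ⟨u, huS, hlu⟩ := exists_lt_of_lt_csSup ⟨a, haS⟩ hl
    rcases (le_csSup hbdd huS).eq_or_lt with huc | huc
    · rw [show c = u from huc.symm]; exact huS.2
    · exact (hsub ⟨hlu, huc⟩).trans huS.2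
  rcases hcb.eq_or_lt with hcb | hcb
  · exact hcb ▸ hcS.2
  obtain ⟨r, hr, hsub⟩ := mem_nhdsGT_iff_exists_Ioo_subset.1 (hgt c)
  obtain ⟨v, hcv, hv⟩ := exists_between (lt_min hr hcb)
  have hvS : v ∈ S :=
    ⟨⟨hac.trans hcv.le, hv.le.trans (min_le_right _ _)⟩,
      (hsub ⟨hcv, hv.trans_le (min_le_left _ _)⟩).trans hcS.2⟩
  exact absurd (le_csSup hbdd hvS) hcv.not_ge

lemma le_of_forall_jump_le {α : Type*} [Preorder α] {φ : ℝ → α}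
    (hφ : ∀ t, ∃ l r, r ≤ l ∧ (∀ᶠ s in 𝓝[<] t, φ s = l) ∧ ∀ᶠ s in 𝓝[>] t, φ s = r)
    {a b : ℝ} (hab : a < b) {u v : α} (hu : ∀ᶠ s in 𝓝[>] a, φ s = u)
    (hv : ∀ᶠ s in 𝓝[<] b, φ s = v) : v ≤ u := by
  choose L R hRL hL hR using hφ
  have hunique : ∀ {l : Filter ℝ} [l.NeBot] {w w' : α},
      (∀ᶠ s in l, φ s = w) → (∀ᶠ s in l, φ s = w') → w = w' := fun h h' => by
    obtain ⟨_, hw, hw'⟩ := (h.and h').exists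
    exact hw.symm.trans hw'
  have hR_eq : ∀ {U : Set ℝ} {t : ℝ} {w : α}, IsOpen U →
      (∀ᶠ s in 𝓝[U] t, φ s = w) → ∀ᶠ s in 𝓝[U] t, R s = w := fun hU h => by
    filter_upwards [eventually_eventually_nhdsWithin.2 h, eventually_mem_nhdsWithin]
      with s hs hsU
    rw [hU.nhdsWithin_eq hsU] at hs
    exact hunique (hR s) (hs.filter_mono nhdsWithin_le_nhds)
  have hanti : Antitone R := antitone_of_eventually_nhdsGT_of_eventually_nhdsLT
    (fun t => (hR_eq isOpen_Ioi (hR t)).mono fun _ hs => hs.le)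
    (fun t => (hR_eq isOpen_Iio (hL t)).mono fun _ hs => hs ▸ hRL t)
  obtain ⟨c, hcv, hac, -⟩ := ((hR_eq isOpen_Iio hv).and (Ioo_mem_nhdsLT hab)).exists
  calc v = R c := hcv.symm
    _ ≤ R a := hanti hac.le
    _ = u := hunique (hR a) hu

lemma exists_forall_eventually_mul_pos {n : ℕ} [NeZero n] {x : ℝ → Fin n → ℝ} {t₀ : ℝ}
    {l : Filter ℝ} (hl : l ≤ 𝓝 t₀) (hcont : ContinuousAt x t₀) (hx₀ : x t₀ ≠ 0)
    (hprop : ∀ j c, x t₀ j = 0 → (∀ᶠ s in l, 0 < c * x s (j - 1)) →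
      ∃ c', ∀ᶠ s in l, 0 < c' * x s j) :
    ∃ σ : Fin n → ℝ, ∀ᶠ s in l, ∀ j, 0 < σ j * x s j := by
  have hnz : ∀ j, x t₀ j ≠ 0 → ∃ c, ∀ᶠ s in l, 0 < c * x s j := fun j hj =>
    ⟨x t₀ j, hl (((continuous_apply j).continuousAt.comp hcont).eventually_mul_pos hj)⟩
  obtain ⟨i₀, hi₀⟩ := Function.ne_iff.1 hx₀
  choose σ hσ using Fin.forall_of_sub_one_imp
    (p := fun j => ∃ c, ∀ᶠ s in l, 0 < c * x s j) (hnz i₀ hi₀) fun j ⟨c, hc⟩ =>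
    if hj : x t₀ j = 0 then hprop j c hj hc else hnz j hj
  exact ⟨σ, eventually_all.2 hσ⟩

namespace LinCNF

variable {n : ℕ} [NeZero n] (S : LinCNF n)

lemma cyclicDelta_mul_sub_pos (t : ℝ) (j : Fin n) : 0 < cyclicDelta n j * S.sub t j := by
  unfold cyclicDelta
  split_ifs with hj
  · subst hj; linarith [S.sub_neg t]
  · simpa using S.sub_pos t j hj

def field (t : ℝ) (y : Fin n → ℝ) : Fin n → ℝ :=
  fun i => S.diag t i * y i + S.sub t i * y (i - 1)

def coeffBound (t : ℝ) : ℝ := ∑ i, (|S.diag t i| + |S.sub t i|)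

lemma continuous_coeffBound : Continuous S.coeffBound :=
  continuous_finsetSum _ fun i _ => (S.cont_diag i).abs.add (S.cont_sub i).abs

lemma norm_field_le (t : ℝ) (y : Fin n → ℝ) : ‖S.field t y‖ ≤ S.coeffBound t * ‖y‖ := by
  refine (pi_norm_le_iff_of_nonneg (mul_nonneg ?_ (norm_nonneg y))).2 fun i => ?_
  · exact sum_nonneg fun i _ => by positivity
  calc ‖S.field t y i‖ ≤ |S.diag t i| * ‖y‖ + |S.sub t i| * ‖y‖ := by
        rw [field, Real.norm_eq_abs]
        refine (abs_add_le _ _).trans ?_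
        rw [abs_mul, abs_mul]
        gcongr <;> exact norm_le_pi_norm y _
    _ = (|S.diag t i| + |S.sub t i|) * ‖y‖ := by ring
    _ ≤ S.coeffBound t * ‖y‖ := by
        gcongr
        exact single_le_sum (f := fun i => |S.diag t i| + |S.sub t i|)
          (fun j _ => by positivity) (mem_univ i)

lemma field_sub (t : ℝ) (y z : Fin n → ℝ) : S.field t y - S.field t z = S.field t (y - z) := by
  ext i; simp only [field, Pi.sub_apply]; ring

lemma lipschitzWith_field {t : ℝ} {K : ℝ} (ht : S.coeffBound t ≤ K) :
    LipschitzWith K.toNNReal (S.field t) :=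
  LipschitzWith.of_dist_le_mul fun y z => by
    rw [dist_eq_norm, dist_eq_norm, field_sub]
    exact (S.norm_field_le t _).trans
      (mul_le_mul_of_nonneg_right (ht.trans (le_max_left K 0)) (norm_nonneg _))

namespace IsSolution

variable {S} {x : ℝ → Fin n → ℝ} (hx : S.IsSolution x)
include hx

lemma hasDerivAt (t : ℝ) : HasDerivAt x (S.field t (x t)) t :=
  hasDerivAt_pi.2 (hx t)

lemma continuous : Continuous x :=
  continuous_pi fun i => continuous_iff_continuousAt.2 fun t => (hx t i).continuousAt

lemma eq_zero_of_apply_eq_zero {t₀ : ℝ} (h : x t₀ = 0) : x = 0 := by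
  have hlocal : ∀ t, x t = 0 → x =ᶠ[𝓝 t] 0 := fun t ht =>
    ODE_solution_unique_of_eventually (s := fun _ => univ)
      ((S.continuous_coeffBound.continuousAt.eventually_lt continuousAt_const
        (lt_add_one (S.coeffBound t))).mono fun _ h =>
          (S.lipschitzWith_field h.le).lipschitzOnWith)
      (Eventually.of_forall fun t => ⟨hx.hasDerivAt t, mem_univ _⟩)
      (Eventually.of_forall fun t => ⟨(hasDerivAt_const t 0).congr_deriv
        (by ext; simp [field]), mem_univ _⟩) ht
  have hclopen : IsClopen {t | x t = 0} :=
    ⟨isClosed_eq hx.continuous continuous_const,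
      isOpen_iff_mem_nhds.2 fun t ht => hlocal t ht⟩
  funext t
  exact Set.eq_univ_iff_forall.1 (hclopen.eq_univ ⟨t₀, h⟩) t

/-- `exp (-∫ aⱼⱼ) xⱼ` has derivative `exp (-∫ aⱼⱼ) aⱼ,ⱼ₋₁ xⱼ₋₁`, and `δⱼ aⱼ,ⱼ₋₁ > 0`. -/
lemma strictMonoOn_integratingFactor_mul (j : Fin n) (t₀ : ℝ) {D : Set ℝ} (hD : Convex ℝ D)
    {c : ℝ} (hc : ∀ u ∈ interior D, 0 < c * x u (j - 1)) :
    StrictMonoOn (fun u => Real.exp (-∫ r in t₀..u, S.diag r j) *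
      (c * (cyclicDelta n j * x u j))) D := by
  have hderiv : ∀ u, HasDerivAt (fun u => Real.exp (-∫ r in t₀..u, S.diag r j) *
      (c * (cyclicDelta n j * x u j))) (Real.exp (-∫ r in t₀..u, S.diag r j) *
      ((cyclicDelta n j * S.sub u j) * (c * x u (j - 1)))) u := fun u => by
    have hE : HasDerivAt (fun u => Real.exp (-∫ r in t₀..u, S.diag r j))
        (Real.exp (-∫ r in t₀..u, S.diag r j) * -S.diag u j) u :=
      ((S.cont_diag j).integral_hasStrictDerivAt t₀ u).hasDerivAt.neg.exp
    exact (hE.mul (((hx u j).const_mul (cyclicDelta n j)).const_mul c)).congr_deriv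
      (by ring)
  refine strictMonoOn_of_hasDerivWithinAt_pos hD
    (fun u _ => (hderiv u).continuousAt.continuousWithinAt)
    (fun u _ => (hderiv u).hasDerivWithinAt) fun u hu => ?_
  exact mul_pos (Real.exp_pos _) (mul_pos (S.cyclicDelta_mul_sub_pos u j) (hc u hu))

lemma eventually_nhdsGT_mul_pos {t₀ : ℝ} {j : Fin n} {c : ℝ} (hj : x t₀ j = 0)
    (h : ∀ᶠ s in 𝓝[>] t₀, 0 < c * x s (j - 1)) :
    ∀ᶠ s in 𝓝[>] t₀, 0 < c * (cyclicDelta n j * x s j) := by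
  obtain ⟨b, hb, hsub⟩ := mem_nhdsGT_iff_exists_Ioo_subset.1 h
  have hmono := hx.strictMonoOn_integratingFactor_mul j t₀ (convex_Ico t₀ b)
    (by rwa [interior_Ico])
  filter_upwards [Ioo_mem_nhdsGT hb] with s hs
  have := hmono (left_mem_Ico.2 hb) (Ioo_subset_Ico_self hs) hs.1
  simp only [hj, mul_zero] at this
  exact pos_of_mul_pos_right this (Real.exp_pos _).le

lemma eventually_nhdsLT_mul_neg {t₀ : ℝ} {j : Fin n} {c : ℝ} (hj : x t₀ j = 0)
    (h : ∀ᶠ s in 𝓝[<] t₀, 0 < c * x s (j - 1)) :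
    ∀ᶠ s in 𝓝[<] t₀, c * (cyclicDelta n j * x s j) < 0 := by
  obtain ⟨a, ha, hsub⟩ := mem_nhdsLT_iff_exists_Ioo_subset.1 h
  have hmono := hx.strictMonoOn_integratingFactor_mul j t₀ (convex_Ioc a t₀)
    (by rwa [interior_Ioc])
  filter_upwards [Ioo_mem_nhdsLT ha] with s hs
  have := hmono (Ioo_subset_Ioc_self hs) (right_mem_Ioc.2 ha) hs.2
  simp only [hj, mul_zero] at this
  exact neg_of_mul_neg_right this (Real.exp_pos _).le

lemma exists_eventually_nhdsGT {t₀ : ℝ} (hx₀ : x t₀ ≠ 0) :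
    ∃ σ : Fin n → ℝ, ∀ᶠ s in 𝓝[>] t₀, ∀ i, 0 < σ i * x s i ∧
      (x t₀ i = 0 → 0 < cyclicDelta n i * x s i * x s (i - 1)) := by
  obtain ⟨σ, hσ⟩ := exists_forall_eventually_mul_pos nhdsWithin_le_nhds
    hx.continuous.continuousAt hx₀ fun j c hj hc =>
      ⟨c * cyclicDelta n j, by simpa only [mul_assoc] using hx.eventually_nhdsGT_mul_pos hj hc⟩
  have hzero : ∀ i, ∀ᶠ s in 𝓝[>] t₀,
      x t₀ i = 0 → 0 < cyclicDelta n i * x s i * x s (i - 1) := fun i => by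
    by_cases hi : x t₀ i = 0
    · filter_upwards [hσ, hx.eventually_nhdsGT_mul_pos hi (hσ.mono fun s hs => hs (i - 1))]
        with s hs hs' _
      exact mul_pos_of_mul_pos_of_mul_pos hs' (hs (i - 1))
    · exact Eventually.of_forall fun _ h => absurd h hi
  exact ⟨σ, by filter_upwards [hσ, eventually_all.2 hzero] with s hs hs' i using ⟨hs i, hs' i⟩⟩

lemma exists_eventually_nhdsLT {t₀ : ℝ} (hx₀ : x t₀ ≠ 0) :
    ∃ σ : Fin n → ℝ, ∀ᶠ s in 𝓝[<] t₀, ∀ i, 0 < σ i * x s i ∧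
      (x t₀ i = 0 → cyclicDelta n i * x s i * x s (i - 1) < 0) := by
  obtain ⟨σ, hσ⟩ := exists_forall_eventually_mul_pos nhdsWithin_le_nhds
    hx.continuous.continuousAt hx₀ fun j c hj hc =>
      ⟨-(c * cyclicDelta n j), (hx.eventually_nhdsLT_mul_neg hj hc).mono fun s hs => by
        rw [neg_mul, mul_assoc]; exact neg_pos.2 hs⟩
  have hzero : ∀ i, ∀ᶠ s in 𝓝[<] t₀,
      x t₀ i = 0 → cyclicDelta n i * x s i * x s (i - 1) < 0 := fun i => by
    by_cases hi : x t₀ i = 0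
    · filter_upwards [hσ, hx.eventually_nhdsLT_mul_neg hi (hσ.mono fun s hs => hs (i - 1))]
        with s hs hs' _
      have := mul_pos_of_mul_pos_of_mul_pos (b := -(cyclicDelta n i * x s i))
        (by linarith) (hs (i - 1))
      linarith
    · exact Eventually.of_forall fun _ h => absurd h hi
  exact ⟨σ, by filter_upwards [hσ, eventually_all.2 hzero] with s hs hs' i using ⟨hs i, hs' i⟩⟩

lemma exists_cyclicN_nhdsLT_nhdsGT {t₀ : ℝ} (hx₀ : x t₀ ≠ 0) :
    ∃ l r : ℕ, r ≤ l ∧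
      (∀ᶠ s in 𝓝[<] t₀, x s ∈ cyclicLambda n ∧ cyclicN n (x s) = l) ∧
      ∀ᶠ s in 𝓝[>] t₀, x s ∈ cyclicLambda n ∧ cyclicN n (x s) = r := by
  obtain ⟨σl, hl⟩ := hx.exists_eventually_nhdsLT hx₀
  obtain ⟨σr, hr⟩ := hx.exists_eventually_nhdsGT hx₀
  have hsign : ∀ {σ y : Fin n → ℝ}, (∀ i, 0 < σ i * y i) →
      y ∈ cyclicLambda n ∧ cyclicN n y = cyclicN n σ := fun h =>
    ⟨mem_cyclicLambda_of_mul_pos h, (cyclicN_eq_of_mul_pos h).symm⟩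
  refine ⟨cyclicN n σl, cyclicN n σr, ?_, hl.mono fun s hs => hsign fun i => (hs i).1,
    hr.mono fun s hs => hsign fun i => (hs i).1⟩
  have hnear : ∀ᶠ s in 𝓝 t₀, ∀ i, x t₀ i ≠ 0 → 0 < x t₀ i * x s i :=
    eventually_all.2 fun i => by
      by_cases hi : x t₀ i = 0
      · exact Eventually.of_forall fun _ h => absurd hi h
      · filter_upwards [((continuous_apply i).comp hx.continuous).continuousAt.eventually_mul_pos
          hi] with s hs _ using hs
  obtain ⟨sl, hsl, hsl'⟩ := (hl.and (nhdsWithin_le_nhds hnear)).exists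
  obtain ⟨sr, hsr, hsr'⟩ := (hr.and (nhdsWithin_le_nhds hnear)).exists
  rw [← (hsign fun i => (hsl i).1).2, ← (hsign fun i => (hsr i).1).2]
  classical
  exact cyclicN_le_of_sign_agree_off {i | x t₀ i = 0}
    (fun i hi => (hsr i).2 (mem_filter.1 hi).2) (fun i hi => (hsl i).2 (mem_filter.1 hi).2)
    fun i hi => mul_pos_of_mul_pos_of_mul_pos
      (hsr' i fun h => hi (mem_filter.2 ⟨mem_univ i, h⟩))
      (hsl' i fun h => hi (mem_filter.2 ⟨mem_univ i, h⟩))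

end IsSolution

end LinCNF

theorem stmt0_general (n : ℕ) [NeZero n] (S : LinCNF n) (x : ℝ → Fin n → ℝ)
    (hsol : S.IsSolution x) (hnontriv : ¬ ∀ t, x t = 0) :
    (∀ t : ℝ, x t ∉ cyclicGood n →
      ∃ ε > (0 : ℝ), ∀ s : ℝ, s ≠ t → |s - t| < ε → x s ∈ cyclicGood n) ∧
    (∀ s t : ℝ, s < t → x s ∈ cyclicGood n → x t ∈ cyclicGood n →
      cyclicNm n (x t) ≤ cyclicNm n (x s)) := by
  have hx₀ : ∀ t, x t ≠ 0 := fun t h =>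
    hnontriv (congrFun (hsol.eq_zero_of_apply_eq_zero h))
  have hstep := fun t => hsol.exists_cyclicN_nhdsLT_nhdsGT (hx₀ t)
  refine ⟨fun t _ => ?_, fun s t hst hs ht => ?_⟩
  · obtain ⟨_, _, -, hl, hr⟩ := hstep t
    have hgood : ∀ᶠ s in 𝓝[≠] t, x s ∈ cyclicGood n := by
      rw [← nhdsLT_sup_nhdsGT, eventually_sup]
      exact ⟨hl.mono fun _ h => mem_cyclicGood_of_mem_cyclicLambda h.1,
        hr.mono fun _ h => mem_cyclicGood_of_mem_cyclicLambda h.1⟩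
    obtain ⟨ε, hε, hball⟩ := Metric.mem_nhdsWithin_iff.1 hgood
    exact ⟨ε, hε, fun s hst hd => hball ⟨by rwa [Metric.mem_ball, Real.dist_eq], hst⟩⟩
  · obtain ⟨_, rs, -, -, hrs⟩ := hstep s
    obtain ⟨lt, _, -, hlt, -⟩ := hstep t
    rw [cyclicNm_eq_of_tendsto ht ((hsol.continuous.tendsto t).mono_left nhdsWithin_le_nhds) hlt,
      cyclicNm_eq_of_tendsto hs ((hsol.continuous.tendsto s).mono_left nhdsWithin_le_nhds) hrs]
    refine le_of_forall_jump_le (fun u => ?_) hst (hrs.mono fun _ h => h.2)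
      (hlt.mono fun _ h => h.2)
    obtain ⟨l, r, hrl, hl, hr⟩ := hstep u
    exact ⟨l, r, hrl, hl.mono fun _ h => h.2, hr.mono fun _ h => h.2⟩

/-- For a nontrivial solution `x` of the linear cyclic negative
feedback system, the set of times at which `x(t) ∉ 𝒩` consists of isolated
points, and `N(x(·))` is nonincreasing along the solution (on 𝒩 the value of
the continuous extension of `N` is `N_m = N_M`). -/
theorem stmt0 (n : ℕ) [NeZero n] (hn : 2 ≤ n) (S : LinCNF n) (x : ℝ → Fin n → ℝ)
    (hsol : S.IsSolution x) (hnontriv : ¬ ∀ t, x t = 0) :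
    (∀ t : ℝ, x t ∉ cyclicGood n →
      ∃ ε > (0 : ℝ), ∀ s : ℝ, s ≠ t → |s - t| < ε → x s ∈ cyclicGood n) ∧
    (∀ s t : ℝ, s < t → x s ∈ cyclicGood n → x t ∈ cyclicGood n →
      cyclicNm n (x t) ≤ cyclicNm n (x s)) :=
  stmt0_general n S x hsol hnontriv
end

section
/- Let B : ℝ → Mₙ(ℝ) be a continuous matrix-valued function and g : ℝ → ℝⁿ a continuous function satisfying g(t) = g_m t^m + o(t^m) as t → 0, where g_m ∈ ℝⁿ and m is a nonnegative integer. If y : ℝ → ℝⁿ is the solution of ẏ = B(t)y + g(t) with y(0) = 0, then y(t) = (g_m/(m+1)) t^{m+1} + o(t^{m+1}) as t → 0. -/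
/-!
By the mean value inequality on `[0, t]`, a function vanishing at `0` whose derivative is
`O(tᵏ)` (resp. `o(tᵏ)`) is itself `O(tᵏ⁺¹)` (resp. `o(tᵏ⁺¹)`). As `B` is bounded near `0`, a
bootstrap starting from `y = O(1)` gives `y = O(t^(m+1))`. Then
`z(t) = y(t) - t^(m+1)/(m+1) • g_m` vanishes at `0` and has derivative
`B(t) y(t) + (g(t) - t^m • g_m) = o(t^m)`, so `z = o(t^(m+1))`.
-/

open Filter Topology Asymptotics Matrix

namespace Asymptotics

variable {E : Type*} [NormedAddCommGroup E] [NormedSpace ℝ E]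

theorem IsBigOWith.pow_succ_of_hasDerivAt {f f' : ℝ → E} {c : ℝ} {k : ℕ} (hc : 0 ≤ c)
    (hf : ∀ᶠ t in 𝓝 0, HasDerivAt f (f' t) t) (hf0 : f 0 = 0)
    (h : IsBigOWith c (𝓝 0) f' fun t => t ^ k) :
    IsBigOWith c (𝓝 0) f fun t => t ^ (k + 1) := by
  rw [IsBigOWith_def] at h ⊢
  obtain ⟨δ, hδ, hball⟩ := Metric.eventually_nhds_iff_ball.1 (hf.and h)
  filter_upwards [Metric.ball_mem_nhds 0 hδ] with t ht
  have hsub : Set.uIcc 0 t ⊆ Metric.ball 0 δ := fun s hs => by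
    simpa using (Set.abs_sub_left_of_mem_uIcc hs).trans_lt (by simpa using ht)
  have hbound : ∀ s ∈ Set.uIcc 0 t, ‖f' s‖ ≤ c * ‖t ^ k‖ := fun s hs => by
    refine (hball s (hsub hs)).2.trans (mul_le_mul_of_nonneg_left ?_ hc)
    simpa only [norm_pow] using
      pow_le_pow_left₀ (norm_nonneg s) (by simpa using Set.abs_sub_left_of_mem_uIcc hs) k
  have := (convex_uIcc 0 t).norm_image_sub_le_of_norm_hasDerivWithin_le
    (fun s hs => ((hball s (hsub hs)).1).hasDerivWithinAt) hbound Set.left_mem_uIcc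
    Set.right_mem_uIcc
  simpa [hf0, pow_succ, mul_assoc] using this

theorem IsBigO.pow_succ_of_hasDerivAt {f f' : ℝ → E} {k : ℕ}
    (hf : ∀ᶠ t in 𝓝 0, HasDerivAt f (f' t) t) (hf0 : f 0 = 0)
    (h : f' =O[𝓝 0] fun t => t ^ k) : f =O[𝓝 0] fun t => t ^ (k + 1) := by
  obtain ⟨c, hc, h⟩ := h.exists_pos
  exact (h.pow_succ_of_hasDerivAt hc.le hf hf0).isBigO

theorem IsLittleO.pow_succ_of_hasDerivAt {f f' : ℝ → E} {k : ℕ}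
    (hf : ∀ᶠ t in 𝓝 0, HasDerivAt f (f' t) t) (hf0 : f 0 = 0)
    (h : f' =o[𝓝 0] fun t => t ^ k) : f =o[𝓝 0] fun t => t ^ (k + 1) :=
  IsLittleO.of_isBigOWith fun _c hc => (h.def' hc).pow_succ_of_hasDerivAt hc.le hf hf0

theorem IsLittleO.nhds_of_nhdsNE {α F G : Type*} [TopologicalSpace α] [NormedAddCommGroup F]
    [NormedAddCommGroup G] {x : α} [(𝓝[≠] x).NeBot] {f : α → F} {g : α → G}
    (hf : ContinuousAt f x) (hg : g =O[𝓝[≠] x] fun _ => (1 : ℝ)) (h : f =o[𝓝[≠] x] g) :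
    f =o[𝓝 x] g := by
  have hfx : f x = 0 := tendsto_nhds_unique (hf.mono_left nhdsWithin_le_nhds)
    ((isLittleO_one_iff ℝ).1 (h.trans_isBigO hg))
  simpa using h.insert hfx

theorem IsBigO.mulVec {α ι R F : Type*} [Fintype ι] [SeminormedRing R]
    [SeminormedAddCommGroup F] {l : Filter α} {B : α → Matrix ι ι R} {v : α → ι → R} {g : α → F}
    (hv : v =O[l] g) (hB : ∀ i j, (fun t => B t i j) =O[l] fun _ => (1 : ℝ)) :
    (fun t => B t *ᵥ v t) =O[l] g := by
  rw [isBigO_pi]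
  intro i
  refine IsBigO.fun_sum (s := Finset.univ) (A := fun j t => B t i j * v t j) fun j _ => ?_
  have hvj : (fun t => v t j) =O[l] fun t => ‖g t‖ :=
    ((isBigO_of_le l fun t => norm_le_pi_norm (v t) j).trans hv).norm_right
  simpa using (hB i j).mul hvj |>.trans_le fun t => by simp

theorem isBigO_pow_succ_of_hasDerivAt_mulVec {ι : Type*} [Fintype ι] {B : ℝ → Matrix ι ι ℝ}
    {g y : ℝ → ι → ℝ} {m : ℕ} (hB : ∀ i j, (fun t => B t i j) =O[𝓝 0] fun _ => (1 : ℝ))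
    (hg : g =O[𝓝 0] fun t => t ^ m) (hy : ∀ᶠ t in 𝓝 0, HasDerivAt y (B t *ᵥ y t + g t) t)
    (hy0 : y 0 = 0) : y =O[𝓝 0] fun t => t ^ (m + 1) := by
  suffices ∀ k ≤ m + 1, y =O[𝓝 0] fun t => t ^ k from this _ le_rfl
  intro k hk
  induction k with
  | zero => simpa using hy.self_of_nhds.continuousAt.tendsto.isBigO_one ℝ
  | succ k ih =>
    have hpow : (fun t : ℝ => t ^ m) =O[𝓝 0] fun t => t ^ k := by
      rcases (Nat.lt_succ_iff.1 hk).eq_or_lt with rfl | h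
      · exact isBigO_refl _ _
      · exact (isLittleO_pow_pow h).isBigO
    exact IsBigO.pow_succ_of_hasDerivAt hy hy0
      (((ih (by omega)).mulVec hB).add (hg.trans hpow))

end Asymptotics

theorem stmt4_general (n : ℕ)
    (B : ℝ → Matrix (Fin n) (Fin n) ℝ) (hB : ∀ i j, Continuous fun t => B t i j)
    (g : ℝ → Fin n → ℝ) (hg : Continuous g)
    (m : ℕ) (gm : Fin n → ℝ)
    (hgasym : Tendsto (fun t : ℝ => (t ^ m)⁻¹ • (g t - t ^ m • gm))
      (𝓝[≠] (0 : ℝ)) (𝓝 0))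
    (y : ℝ → Fin n → ℝ)
    (hy : ∀ (t : ℝ) (i : Fin n),
      HasDerivAt (fun s => y s i) ((B t).mulVec (y t) i + g t i) t)
    (hy0 : y 0 = 0) :
    Tendsto (fun t : ℝ =>
        (t ^ (m + 1))⁻¹ • (y t - (t ^ (m + 1) / (m + 1 : ℝ)) • gm))
      (𝓝[≠] (0 : ℝ)) (𝓝 0) := by
  have hy' : ∀ᶠ t in 𝓝 0, HasDerivAt y (B t *ᵥ y t + g t) t :=
    Eventually.of_forall fun t => hasDerivAt_pi.2 (hy t)
  have hB1 : ∀ i j, (fun t => B t i j) =O[𝓝 0] fun _ => (1 : ℝ) :=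
    fun i j => ((hB i j).tendsto 0).isBigO_one ℝ
  have hgo : (fun t => g t - t ^ m • gm) =o[𝓝 0] fun t => t ^ m := by
    -- `hgasym` says nothing at `t = 0`; continuity of `g` forces `g 0 = 0 ^ m • gm` there.
    refine IsLittleO.nhds_of_nhdsNE (by fun_prop)
      ((((continuous_pow m).tendsto 0).mono_left nhdsWithin_le_nhds).isBigO_one ℝ) ?_
    refine isLittleOTVS_iff_isLittleO.1 ((isLittleOTVS_iff_tendsto_inv_smul ?_).2 hgasym)
    filter_upwards [self_mem_nhdsWithin] with t ht h
    exact absurd h (pow_ne_zero m ht)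
  have hgO : g =O[𝓝 0] fun t => t ^ m := by
    simpa using hgo.isBigO.add
      (isBigO_of_le' (c := ‖gm‖) _ fun t => (norm_smul_le _ _).trans_eq (mul_comm _ _))
  have hyO := isBigO_pow_succ_of_hasDerivAt_mulVec hB1 hgO hy' hy0
  have hdiff : ∀ t : ℝ, HasDerivAt (fun s => (s ^ (m + 1) / (m + 1 : ℝ)) • gm) (t ^ m • gm) t := by
    intro t
    have h := ((hasDerivAt_pow (m + 1) t).div_const ((m : ℝ) + 1)).smul_const gm
    rwa [Nat.add_sub_cancel, Nat.cast_add_one, mul_div_cancel_left₀ _ (by positivity)] at h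
  have hz : (fun t => y t - (t ^ (m + 1) / (m + 1 : ℝ)) • gm) =o[𝓝 0] fun t => t ^ (m + 1) := by
    refine IsLittleO.pow_succ_of_hasDerivAt (hy'.mono fun t ht => ?_) (by simp [hy0])
      (((hyO.mulVec hB1).trans_isLittleO (isLittleO_pow_pow m.lt_succ_self)).add hgo)
    simpa only [add_sub_assoc] using ht.fun_sub (hdiff t)
  exact (hz.mono nhdsWithin_le_nhds).tendsto_inv_smul_nhds_zero

/-- If `g(t) = g_m tᵐ + o(tᵐ)` as `t → 0` and `y` solves
`ẏ = B(t)y + g(t)`, `y(0) = 0`, then `y(t) = (g_m/(m+1)) t^{m+1} + o(t^{m+1})`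
as `t → 0`. -/
theorem stmt4 (n : ℕ) (hn : 1 ≤ n)
    (B : ℝ → Matrix (Fin n) (Fin n) ℝ) (hB : ∀ i j, Continuous fun t => B t i j)
    (g : ℝ → Fin n → ℝ) (hg : Continuous g)
    (m : ℕ) (gm : Fin n → ℝ)
    (hgasym : Tendsto (fun t : ℝ => (t ^ m)⁻¹ • (g t - t ^ m • gm))
      (𝓝[≠] (0 : ℝ)) (𝓝 0))
    (y : ℝ → Fin n → ℝ)
    (hy : ∀ (t : ℝ) (i : Fin n),
      HasDerivAt (fun s => y s i) ((B t).mulVec (y t) i + g t i) t)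
    (hy0 : y 0 = 0) :
    Tendsto (fun t : ℝ =>
        (t ^ (m + 1))⁻¹ • (y t - (t ^ (m + 1) / (m + 1 : ℝ)) • gm))
      (𝓝[≠] (0 : ℝ)) (𝓝 0) :=
  stmt4_general n B hB g hg m gm hgasym y hy hy0
end
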